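/- Let H be a complex Hilbert space and let k be an integer with 4 ≤ 2k ≤ dim H and k ≤ dim H − 4. If X, Y are non-compatible adjacent k-dimensional subspaces of H, then there are infinitely many k-dimensional subspaces Z of H ortho-adjacent to both X and Y and such that there are infinitely many k-dimensional subspaces Z' of H ortho-adjacent to each of X, Y and Z. -/

import Mathlib

noncomputable section

open scoped Classical

variable {H : Type*} [NormedAddCommGroup H] [InnerProductSpace ℂ H] [CompleteSpace H]

/-- The orthogonal projection onto `X`, as an operator `H → H` (junk value `0` if the
orthogonal projection onto `X` does not exist; it always exists for finite-dimensional,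
and more generally complete, subspaces). -/
noncomputable def projOn (X : Submodule ℂ H) : H →L[ℂ] H :=
  if h : Submodule.HasOrthogonalProjection X then
    haveI := h
    X.subtypeL.comp (Submodule.orthogonalProjectionOnto X)
  else 0

/-- Two subspaces of `H` are compatible if their orthogonal projections commute. -/
def Compatible (X Y : Submodule ℂ H) : Prop :=
  projOn X * projOn Y = projOn Y * projOn X

/-- `X` is a `k`-dimensional subspace of `H`. -/
def IsDim (k : ℕ) (X : Submodule ℂ H) : Prop :=
  FiniteDimensional ℂ X ∧ Module.finrank ℂ X = k

/-- Two (distinct) `k`-dimensional subspaces are adjacent if their intersection is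
`(k-1)`-dimensional. -/
def AdjacentSub (k : ℕ) (X Y : Submodule ℂ H) : Prop :=
  X ≠ Y ∧ Module.finrank ℂ ↥(X ⊓ Y) = k - 1

/-- Ortho-adjacency: adjacent and compatible. -/
def OrthoAdjacent (k : ℕ) (X Y : Submodule ℂ H) : Prop :=
  AdjacentSub k X Y ∧ Compatible X Y

/-- The ortho-Grassmann graph `Γ⊥_k(H)` on the `k`-dimensional subspaces of `H`:
two `k`-dimensional subspaces are connected by an edge if they are ortho-adjacent. -/
def orthoGrassmannGraph (H : Type*) [NormedAddCommGroup H] [InnerProductSpace ℂ H]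
    [CompleteSpace H] (k : ℕ) : SimpleGraph {X : Submodule ℂ H // IsDim k X} where
  Adj X Y := OrthoAdjacent k X.1 Y.1
  symm := ⟨by
    rintro X Y ⟨⟨hne, hdim⟩, hc⟩
    refine ⟨⟨hne.symm, by rwa [inf_comm]⟩, ?_⟩
    unfold Compatible at hc ⊢
    exact hc.symm⟩
  loopless := ⟨fun X h => h.1.1 rfl⟩

/-- The Grassmann graph `Γ_k(H)` on the `k`-dimensional subspaces of `H`:
two `k`-dimensional subspaces are connected by an edge if they are adjacent. -/
def grassmannGraph (H : Type*) [NormedAddCommGroup H] [InnerProductSpace ℂ H]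
    [CompleteSpace H] (k : ℕ) : SimpleGraph {X : Submodule ℂ H // IsDim k X} where
  Adj X Y := AdjacentSub k X.1 Y.1
  symm := ⟨by
    rintro X Y ⟨hne, hdim⟩
    exact ⟨hne.symm, by rwa [inf_comm]⟩⟩
  loopless := ⟨fun X h => h.1 rfl⟩

/-! Put `N = X ⊓ Y`, of dimension `k - 1`. For a nonzero `u ⟂ X ⊔ Y`, the subspace
`Z = N ⊔ ℂ ∙ u` meets `X` and `Y` exactly in `N`, and it is compatible with both because
`P_X` fixes `N` and kills `u`, so that `P_X` maps `Z` into itself. Since `(X ⊔ Y)ᗮ` has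
dimension at least `3`, distinct lines `ℂ ∙ u` in it give infinitely many such `Z`. For each of
them the same construction with `v ⟂ X ⊔ Y ⊔ ℂ ∙ u`, a subspace of codimension at least `2`,
produces infinitely many `Z' = N ⊔ ℂ ∙ v` ortho-adjacent to `X`, `Y` and `Z`. -/

open Module Submodule

theorem LinearIndependent.injective_span_singleton_add_smul {K V : Type*} [Field K]
    [AddCommGroup V] [Module K V] {x y : V} (h : LinearIndependent K ![x, y]) :
    Function.Injective fun c : K ↦ K ∙ (x + c • y) := by
  intro c d (hcd : K ∙ (x + c • y) = K ∙ (x + d • y))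
  obtain ⟨a, ha⟩ := mem_span_singleton.1 (hcd ▸ mem_span_singleton_self (x + c • y))
  obtain ⟨ha1, hd⟩ := LinearIndependent.pair_iff.1 h (a - 1) (a * d - c) (by
    rw [← sub_eq_zero] at ha; rw [← ha]; module)
  rw [sub_eq_zero] at ha1 hd
  rwa [ha1, one_mul, eq_comm] at hd

section

variable {𝕜 E : Type*} [RCLike 𝕜] [NormedAddCommGroup E] [InnerProductSpace 𝕜 E]

theorem Submodule.sup_inf_eq_left_of_le_orthogonal {N L W : Submodule 𝕜 E} (hNW : N ≤ W)
    (hLW : L ≤ Wᗮ) : (N ⊔ L) ⊓ W = N := by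
  have hLW' : L ⊓ W = ⊥ := (W.orthogonal_disjoint.symm.mono_left hLW).eq_bot
  rw [sup_inf_assoc_of_le L hNW, hLW', sup_bot_eq]

theorem Submodule.finrank_sup_span_singleton_of_mem_orthogonal {N : Submodule 𝕜 E}
    [FiniteDimensional 𝕜 N] {u : E} (hu : u ∈ Nᗮ) (hu0 : u ≠ 0) :
    finrank 𝕜 ↥(N ⊔ 𝕜 ∙ u) = finrank 𝕜 N + 1 := by
  have hdisj : N ⊓ 𝕜 ∙ u = ⊥ :=
    (N.orthogonal_disjoint.mono_right ((span_singleton_le_iff_mem u _).2 hu)).eq_bot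
  have := finrank_sup_add_finrank_inf_eq N (𝕜 ∙ u)
  rwa [hdisj, finrank_bot, finrank_span_singleton hu0, add_zero] at this

theorem Submodule.one_lt_rank_orthogonal {W : Submodule 𝕜 E} [FiniteDimensional 𝕜 W]
    (hW : ((finrank 𝕜 W + 2 : ℕ) : Cardinal) ≤ Module.rank 𝕜 E) : 1 < Module.rank 𝕜 Wᗮ := by
  have hE : Module.rank 𝕜 E ≤ Module.rank 𝕜 Wᗮ + finrank 𝕜 W := by
    have := rank_add_le_rank_add_rank Wᗮ W
    rwa [sup_comm, sup_orthogonal_of_hasOrthogonalProjection, rank_top,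
      ← finrank_eq_rank 𝕜 W] at this
  have h2 : (2 : Cardinal) + finrank 𝕜 W ≤ Module.rank 𝕜 Wᗮ + finrank 𝕜 W := by
    rw [add_comm]; exact_mod_cast hW.trans hE
  exact Cardinal.one_lt_two.trans_le ((Cardinal.add_nat_le_add_nat_iff _).1 h2)

theorem Submodule.infinite_image_sup_span_orthogonal {N W : Submodule 𝕜 E}
    [FiniteDimensional 𝕜 W] (hNW : N ≤ W)
    (hW : ((finrank 𝕜 W + 2 : ℕ) : Cardinal) ≤ Module.rank 𝕜 E) :
    ((fun u ↦ N ⊔ 𝕜 ∙ u) '' {u | u ∈ Wᗮ ∧ u ≠ 0}).Infinite := by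
  obtain ⟨x, hx⟩ := rank_pos_iff_exists_ne_zero.1 (zero_lt_one.trans (one_lt_rank_orthogonal hW))
  obtain ⟨y, hxy⟩ := exists_linearIndependent_pair_of_one_lt_rank (one_lt_rank_orthogonal hW) hx
  replace hxy : LinearIndependent 𝕜 ![(x : E), y] := by
    rw [LinearIndependent.pair_iff] at hxy ⊢
    exact fun s t hst ↦ hxy s t (Subtype.ext (by simpa using hst))
  have hmem (c : 𝕜) : (x : E) + c • y ∈ Wᗮ := Wᗮ.add_mem x.2 (Wᗮ.smul_mem c y.2)
  have hne (c : 𝕜) : (x : E) + c • y ≠ 0 := fun h ↦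
    one_ne_zero (LinearIndependent.pair_iff.1 hxy 1 c (by rwa [one_smul])).1
  have hcut (c : 𝕜) : (N ⊔ 𝕜 ∙ ((x : E) + c • y)) ⊓ Wᗮ = 𝕜 ∙ ((x : E) + c • y) := by
    rw [sup_comm]
    exact sup_inf_eq_left_of_le_orthogonal ((span_singleton_le_iff_mem _ _).2 (hmem c))
      (hNW.trans W.le_orthogonal_orthogonal)
  refine Set.infinite_of_injective_forall_mem
    (f := fun c : 𝕜 ↦ N ⊔ 𝕜 ∙ ((x : E) + c • y)) (fun c d hcd ↦ ?_)
    (fun c ↦ ⟨_, ⟨hmem c, hne c⟩, rfl⟩)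
  refine hxy.injective_span_singleton_add_smul ?_
  simpa only [hcut] using congrArg (· ⊓ Wᗮ) hcd

/-- `P_X` maps `Z` into itself, so `P_X P_Z = P_Z P_X P_Z`, which is self-adjoint. -/
theorem Submodule.commute_starProjection_of_forall_mem [CompleteSpace E] {X Z : Submodule 𝕜 E}
    [X.HasOrthogonalProjection] [Z.HasOrthogonalProjection]
    (h : ∀ z ∈ Z, X.starProjection z ∈ Z) : Commute X.starProjection Z.starProjection := by
  have hfix : Z.starProjection * X.starProjection * Z.starProjection =
      X.starProjection * Z.starProjection := by
    ext v
    exact starProjection_eq_self_iff.2 (h _ (Z.starProjection_apply_mem v))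
  have hsa : IsSelfAdjoint (X.starProjection * Z.starProjection) := by
    have := (isSelfAdjoint_starProjection X).conjugate Z.starProjection
    rwa [(isSelfAdjoint_starProjection Z).star_eq, hfix] at this
  calc X.starProjection * Z.starProjection = star (X.starProjection * Z.starProjection) :=
        hsa.star_eq.symm
    _ = Z.starProjection * X.starProjection := by
        rw [star_mul, (isSelfAdjoint_starProjection X).star_eq,
          (isSelfAdjoint_starProjection Z).star_eq]

end

section

variable {E : Type*} [NormedAddCommGroup E] [InnerProductSpace ℂ E]

theorem projOn_eq_starProjection (X : Submodule ℂ E) [hX : X.HasOrthogonalProjection] :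
    projOn X = X.starProjection :=
  dif_pos hX

theorem compatible_of_forall_starProjection_mem [CompleteSpace E] {X Z : Submodule ℂ E}
    [X.HasOrthogonalProjection] [Z.HasOrthogonalProjection]
    (h : ∀ z ∈ Z, X.starProjection z ∈ Z) : Compatible Z X := by
  rw [Compatible, projOn_eq_starProjection, projOn_eq_starProjection]
  exact (commute_starProjection_of_forall_mem h).eq.symm

variable {N X : Submodule ℂ E} [FiniteDimensional ℂ N] {u : E}

theorem isDim_sup_span_singleton (hu : u ∈ Nᗮ) (hu0 : u ≠ 0) :
    IsDim (finrank ℂ N + 1) (N ⊔ ℂ ∙ u) :=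
  ⟨inferInstance, finrank_sup_span_singleton_of_mem_orthogonal hu hu0⟩

theorem orthoAdjacent_sup_span_singleton [CompleteSpace E] [X.HasOrthogonalProjection]
    (hNX : N ≤ X) (hu : u ∈ Xᗮ) (hu0 : u ≠ 0) : OrthoAdjacent (finrank ℂ N + 1) (N ⊔ ℂ ∙ u) X := by
  have hspan : ℂ ∙ u ≤ Xᗮ := (span_singleton_le_iff_mem u _).2 hu
  refine ⟨⟨fun hZX ↦ hu0 ?_, ?_⟩, compatible_of_forall_starProjection_mem fun z hz ↦ ?_⟩
  · exact disjoint_def.1 X.orthogonal_disjoint u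
      (hZX ▸ mem_sup_right (mem_span_singleton_self u)) hu
  · rw [sup_inf_eq_left_of_le_orthogonal hNX hspan, Nat.add_sub_cancel]
  · obtain ⟨n, hn, s, hs, rfl⟩ := mem_sup.1 hz
    rw [map_add, starProjection_eq_self_iff.2 (hNX hn),
      (starProjection_apply_eq_zero_iff X).2 (hspan hs), add_zero]
    exact mem_sup_left hn

end

theorem infinite_common_neighbours_with_infinite_general
    (k : ℕ) (hk : 2 ≤ k)
    (hk4 : (k : Cardinal) + 4 ≤ Module.rank ℂ H)
    (X Y : Submodule ℂ H) (hX : IsDim k X) (hY : IsDim k Y)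
    (hadj : AdjacentSub k X Y) :
    {Z : Submodule ℂ H | IsDim k Z ∧ OrthoAdjacent k Z X ∧ OrthoAdjacent k Z Y ∧
      {Z' : Submodule ℂ H | IsDim k Z' ∧ OrthoAdjacent k Z' X ∧ OrthoAdjacent k Z' Y ∧
        OrthoAdjacent k Z' Z}.Infinite}.Infinite := by
  obtain ⟨_, hXk⟩ := hX
  obtain ⟨_, hYk⟩ := hY
  obtain ⟨-, hXYk⟩ := hadj
  have hXY : finrank ℂ ↥(X ⊔ Y) = k + 1 := by
    have := finrank_sup_add_finrank_inf_eq X Y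
    omega
  have hrank : ((k + 4 : ℕ) : Cardinal) ≤ Module.rank ℂ H := by exact_mod_cast hk4
  have hN : X ⊓ Y ≤ X ⊔ Y := inf_le_sup
  obtain rfl : k = finrank ℂ ↥(X ⊓ Y) + 1 := by omega
  refine (infinite_image_sup_span_orthogonal hN
    (hrank.trans' (Nat.cast_le.2 (by omega)))).mono ?_
  rintro _ ⟨u, ⟨hu, hu0⟩, rfl⟩
  have hW : finrank ℂ ↥(X ⊔ Y ⊔ ℂ ∙ u) = finrank ℂ ↥(X ⊓ Y) + 3 := by
    rw [finrank_sup_span_singleton_of_mem_orthogonal hu hu0, hXY]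
  refine ⟨isDim_sup_span_singleton (orthogonal_le hN hu) hu0,
    orthoAdjacent_sup_span_singleton inf_le_left (orthogonal_le le_sup_left hu) hu0,
    orthoAdjacent_sup_span_singleton inf_le_right (orthogonal_le le_sup_right hu) hu0,
    (infinite_image_sup_span_orthogonal (W := X ⊔ Y ⊔ ℂ ∙ u) (hN.trans le_sup_left)
      (hrank.trans' (Nat.cast_le.2 (by omega)))).mono ?_⟩
  rintro _ ⟨v, ⟨hv, hv0⟩, rfl⟩
  have hvXY : v ∈ (X ⊔ Y)ᗮ := orthogonal_le le_sup_left hv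
  exact ⟨isDim_sup_span_singleton (orthogonal_le hN hvXY) hv0,
    orthoAdjacent_sup_span_singleton inf_le_left (orthogonal_le le_sup_left hvXY) hv0,
    orthoAdjacent_sup_span_singleton inf_le_right (orthogonal_le le_sup_right hvXY) hv0,
    orthoAdjacent_sup_span_singleton le_sup_left (orthogonal_le (sup_le_sup_right hN _) hv) hv0⟩

/-- Suppose `4 ≤ 2k ≤ dim H` and `k ≤ dim H - 4`. If `X, Y` are non-compatible adjacent
`k`-dimensional subspaces of `H`, then there are infinitely many `k`-dimensional subspaces
`Z` ortho-adjacent to both `X, Y` and such that there are infinitely many `k`-dimensional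
subspaces `Z'` ortho-adjacent to each of `X, Y, Z`. -/
theorem infinite_common_neighbours_with_infinite
    (k : ℕ) (hk : 2 ≤ k) (h2k : 2 * (k : Cardinal) ≤ Module.rank ℂ H)
    (hk4 : (k : Cardinal) + 4 ≤ Module.rank ℂ H)
    (X Y : Submodule ℂ H) (hX : IsDim k X) (hY : IsDim k Y)
    (hadj : AdjacentSub k X Y) (hnc : ¬ Compatible X Y) :
    {Z : Submodule ℂ H | IsDim k Z ∧ OrthoAdjacent k Z X ∧ OrthoAdjacent k Z Y ∧
      {Z' : Submodule ℂ H | IsDim k Z' ∧ OrthoAdjacent k Z' X ∧ OrthoAdjacent k Z' Y ∧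
        OrthoAdjacent k Z' Z}.Infinite}.Infinite :=
  infinite_common_neighbours_with_infinite_general k hk hk4 X Y hX hY hadj
end
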